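/- Let 1 ≤ W < d and Φ : ℝ^W → ℝ^d be given by Φ_i(w) = sin(Σ_{j=1}^W a_{ij} w_j) for arbitrary real constants a_{ij}. Then the set F_Φ of gradient-flow-learnable targets has Lebesgue measure 0 in ℝ^d. -/

import Mathlib

/-!
Along the gradient flow the loss is nonincreasing, so its infimum `0` is its limit and
`Φ (w t) → f`. Write `Φ = sin ∘ A` with `A` linear and `θ = A ∘ w`. If every `|f i| < 1`, then
eventually `sin θ` stays in the open cube `(-1, 1)^d`, so no `θ_i` can reach a zero of `cos`:
each `θ_i` is trapped within `π` of its value at some time `T`. The tail of `θ` then lies in a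
compact subset of `range A`, and the limit `f` of `sin θ` is attained, `f ∈ range Φ`. Otherwise
`|f i| = 1` for some `i`. Both `range Φ` (a `C¹` image of a space of dimension `W < d`, hence of
Hausdorff dimension `< d`) and the hyperplanes `f i = ±1` are Lebesgue-null.
-/

open MeasureTheory Filter Topology Set

/-- The square loss `L_f(w) = (1/2)‖f - Φ(w)‖²`. -/
noncomputable def loss {W d : ℕ} (Φ : EuclideanSpace ℝ (Fin W) → EuclideanSpace ℝ (Fin d))
    (f : EuclideanSpace ℝ (Fin d)) (w : EuclideanSpace ℝ (Fin W)) : ℝ :=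
  (1 / 2) * ‖f - Φ w‖ ^ 2

/-- The set of targets learnable by gradient flow started at `0`. -/
def learnableSet {W d : ℕ} (Φ : EuclideanSpace ℝ (Fin W) → EuclideanSpace ℝ (Fin d)) :
    Set (EuclideanSpace ℝ (Fin d)) :=
  {f | ∃ w : ℝ → EuclideanSpace ℝ (Fin W), w 0 = 0 ∧
    (∀ t ≥ (0 : ℝ), HasDerivAt w (-(gradient (loss Φ f) (w t))) t) ∧
    (⨅ t : Set.Ici (0 : ℝ), loss Φ f (w t)) = 0}

open Real

section GradientFlow

variable {E : Type*} [NormedAddCommGroup E] [InnerProductSpace ℝ E] [CompleteSpace E]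

theorem antitoneOn_comp_of_hasDerivAt_neg_gradient {L : E → ℝ} (hL : Differentiable ℝ L) {w : ℝ → E}
    (hw : ∀ t ≥ (0 : ℝ), HasDerivAt w (-(gradient L (w t))) t) :
    AntitoneOn (fun t => L (w t)) (Ici 0) := by
  have hderiv : ∀ t ≥ (0 : ℝ),
      HasDerivAt (fun s => L (w s)) (-‖gradient L (w t)‖ ^ 2) t := fun t ht => by
    refine ((hL (w t)).hasGradientAt.hasFDerivAt.comp_hasDerivAt t (hw t ht)).congr_deriv ?_
    rw [InnerProductSpace.toDual_apply_apply, inner_neg_right, real_inner_self_eq_norm_sq]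
  refine antitoneOn_of_hasDerivWithinAt_nonpos (convex_Ici 0)
    (fun t ht => (hderiv t ht).continuousAt.continuousWithinAt)
    (fun t ht => (hderiv t (interior_subset ht)).hasDerivWithinAt) fun t _ => ?_
  exact neg_nonpos.2 (sq_nonneg _)

end GradientFlow

theorem tendsto_atTop_iInf_Ici_of_antitoneOn {g : ℝ → ℝ} {a : ℝ} (hg : AntitoneOn g (Ici a))
    (hbdd : BddBelow (g '' Ici a)) : Tendsto g atTop (𝓝 (⨅ t : Ici a, g t)) := by
  rw [← tendsto_comp_val_Ici_atTop]
  refine tendsto_atTop_ciInf (fun s t hst => hg s.2 t.2 hst) ?_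
  simpa [← image_eq_range] using hbdd

theorem exists_tendsto_of_mem_learnableSet {W d : ℕ}
    {Φ : EuclideanSpace ℝ (Fin W) → EuclideanSpace ℝ (Fin d)} (hΦ : Differentiable ℝ Φ)
    {f : EuclideanSpace ℝ (Fin d)} (hf : f ∈ learnableSet Φ) :
    ∃ w : ℝ → EuclideanSpace ℝ (Fin W), ContinuousOn w (Ici 0) ∧
      Tendsto (fun t => Φ (w t)) atTop (𝓝 f) := by
  obtain ⟨w, -, hw, hinf⟩ := hf
  have hL : Differentiable ℝ (loss Φ f) :=
    (((differentiable_const f).sub hΦ).norm_sq ℝ).const_mul _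
  have hloss : Tendsto (fun t => loss Φ f (w t)) atTop (𝓝 0) :=
    hinf ▸ tendsto_atTop_iInf_Ici_of_antitoneOn (antitoneOn_comp_of_hasDerivAt_neg_gradient hL hw)
      ⟨0, by rintro _ ⟨t, -, rfl⟩; unfold loss; positivity⟩
  refine ⟨w, fun t ht => (hw t ht).continuousAt.continuousWithinAt, ?_⟩
  have hnorm : ∀ t, ‖Φ (w t) - f‖ = √(2 * loss Φ f (w t)) := fun t => by
    rw [loss, norm_sub_rev, ← mul_assoc, mul_one_div_cancel two_ne_zero, one_mul,
      Real.sqrt_sq (norm_nonneg _)]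
  rw [tendsto_iff_norm_sub_tendsto_zero]
  simpa [hnorm] using (hloss.const_mul 2).sqrt

theorem exists_cos_eq_zero_mem_Icc (x : ℝ) : ∃ z ∈ Icc x (x + π), cos z = 0 := by
  have h := intermediate_value_uIcc (a := x) (b := x + π) continuous_cos.continuousOn
  rw [uIcc_of_le (by linarith [pi_pos] : x ≤ x + π), cos_add_pi] at h
  refine h (mem_uIcc.2 ?_)
  rcases le_total 0 (cos x) with hc | hc
  · exact Or.inr ⟨by linarith, hc⟩
  · exact Or.inl ⟨hc, by linarith⟩

theorem lt_add_pi_of_cos_ne_zero {s : Set ℝ} (hs : IsPreconnected s) {θ : ℝ → ℝ}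
    (hθ : ContinuousOn θ s) (hcos : ∀ t ∈ s, cos (θ t) ≠ 0) {t₀ t : ℝ} (ht₀ : t₀ ∈ s)
    (ht : t ∈ s) : θ t < θ t₀ + π := by
  by_contra! h
  obtain ⟨z, hz, hcz⟩ := exists_cos_eq_zero_mem_Icc (θ t₀)
  obtain ⟨u, hu, rfl⟩ := (hs.image θ hθ).Icc_subset (mem_image_of_mem θ ht₀)
    (mem_image_of_mem θ ht) ⟨hz.1, hz.2.trans h⟩
  exact hcos u hu hcz

theorem mem_image_sin_of_tendsto {ι : Type*} [Fintype ι] {V : Set (ι → ℝ)} (hV : IsClosed V)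
    {θ : ℝ → ι → ℝ} {t₀ : ℝ} (hθ : ContinuousOn θ (Ici t₀)) (hθV : ∀ t, θ t ∈ V)
    {y : ι → ℝ} (hy : ∀ i, |y i| < 1) (hlim : Tendsto (fun t i => sin (θ t i)) atTop (𝓝 y)) :
    y ∈ (fun x i => sin (x i)) '' V := by
  have hU : IsOpen (univ.pi fun _ : ι => Ioo (-1 : ℝ) 1) :=
    isOpen_set_pi finite_univ fun _ _ => isOpen_Ioo
  obtain ⟨T, hT⟩ := eventually_atTop.1 <|
    (hlim.eventually (hU.mem_nhds fun i _ => abs_lt.1 (hy i))).and (eventually_ge_atTop t₀)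
  have hcos : ∀ t ∈ Ici T, ∀ i, cos (θ t i) ≠ 0 := fun t ht i hc => by
    have := (hT t ht).1 i (mem_univ i)
    nlinarith [sin_sq_add_cos_sq (θ t i), this.1, this.2]
  have htrap : ∀ t ≥ T, θ t ∈ Metric.closedBall (θ T) π ∩ V := fun t ht => by
    refine ⟨(dist_pi_le_iff pi_pos.le).2 fun i => ?_, hθV t⟩
    have hθi : ContinuousOn (fun s => θ s i) (Ici T) :=
      ((continuous_apply i).comp_continuousOn hθ).mono (Ici_subset_Ici.2 (hT T le_rfl).2)
    have h₁ := lt_add_pi_of_cos_ne_zero isPreconnected_Ici hθi (fun s hs => hcos s hs i)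
      self_mem_Ici ht
    have h₂ := lt_add_pi_of_cos_ne_zero isPreconnected_Ici hθi (fun s hs => hcos s hs i)
      ht self_mem_Ici
    rw [Real.dist_eq, abs_sub_le_iff]
    constructor <;> linarith
  have hK : IsCompact ((fun x i => sin (x i)) '' (Metric.closedBall (θ T) π ∩ V)) :=
    ((isCompact_closedBall _ _).inter_right hV).image <| by fun_prop
  exact image_mono inter_subset_right <| hK.isClosed.mem_of_tendsto hlim <|
    eventually_atTop.2 ⟨T, fun t ht => mem_image_of_mem _ (htrap t ht)⟩

open scoped NNReal ENNReal in
theorem volume_range_eq_zero_of_contDiff {E : Type*} [NormedAddCommGroup E] [NormedSpace ℝ E]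
    [FiniteDimensional ℝ E] {ι : Type*} [Fintype ι] {g : E → ι → ℝ} (hg : ContDiff ℝ 1 g)
    (h : Module.finrank ℝ E < Fintype.card ι) : volume (range g) = 0 := by
  have hdim : dimH (range g) < ((Fintype.card ι : ℝ≥0) : ℝ≥0∞) :=
    hg.dimH_range_le.trans_lt (by exact_mod_cast h)
  have hnull := hausdorffMeasure_of_dimH_lt hdim
  rwa [NNReal.coe_natCast, hausdorffMeasure_pi_real] at hnull

section SinModel

variable {W d : ℕ} (A : EuclideanSpace ℝ (Fin W) →ₗ[ℝ] (Fin d → ℝ))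

theorem contDiff_sin_comp_linearMap {n : WithTop ℕ∞} : ContDiff ℝ n fun w i => sin (A w i) := by
  have hA : ContDiff ℝ n A := A.toContinuousLinearMap.contDiff
  exact contDiff_pi.2 fun i => contDiff_sin.comp ((contDiff_apply ℝ ℝ i).comp hA)

theorem learnableSet_sin_comp_linearMap_subset :
    learnableSet (fun w => WithLp.toLp 2 fun i => sin (A w i)) ⊆
      WithLp.ofLp ⁻¹' (range (fun w i => sin (A w i)) ∪ ⋃ i, Function.eval i ⁻¹' {-1, 1}) := by
  intro f hf
  obtain ⟨w, hw, hlim⟩ := exists_tendsto_of_mem_learnableSet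
    ((PiLp.contDiff_toLp.comp (contDiff_sin_comp_linearMap A)).differentiable one_ne_zero) hf
  have hlim' : Tendsto (fun t i => sin (A (w t) i)) atTop (𝓝 f.ofLp) :=
    ((PiLp.continuous_ofLp 2 _).tendsto f).comp hlim
  by_cases hf1 : ∀ i, |f i| < 1
  · obtain ⟨_, ⟨v, rfl⟩, hv⟩ := mem_image_sin_of_tendsto A.range.closed_of_finiteDimensional
      (A.continuous_of_finiteDimensional.comp_continuousOn hw) (fun t => mem_range_self (w t))
      hf1 hlim'
    exact Or.inl ⟨v, hv⟩
  · push Not at hf1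
    obtain ⟨i, hi⟩ := hf1
    have hle : |f i| ≤ 1 := le_of_tendsto'
      (((continuous_abs.comp (continuous_apply i)).tendsto _).comp hlim') fun t => abs_sin_le_one _
    refine Or.inr (mem_iUnion.2 ⟨i, ?_⟩)
    rcases (abs_eq zero_le_one).1 (le_antisymm hle hi) with h | h <;> simp [h]

end SinModel

theorem sin_model_learnable_measure_zero_general (W d : ℕ) (hWd : W < d)
    (a : Fin d → Fin W → ℝ) :
    MeasureTheory.volume
      (learnableSet (fun w : EuclideanSpace ℝ (Fin W) =>
        (WithLp.toLp 2 (fun i => Real.sin (∑ j, a i j * w j)) : EuclideanSpace ℝ (Fin d)))) = 0 := by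
  -- `A w i` unfolds to `∑ j, a i j * w j`, so the model is `sin ∘ A` definitionally.
  let A := (Matrix.of a).toLin' ∘ₗ (WithLp.linearEquiv 2 ℝ (Fin W → ℝ)).toLinearMap
  refine measure_mono_null (learnableSet_sin_comp_linearMap_subset A) ?_
  refine (PiLp.volume_preserving_ofLp _).quasiMeasurePreserving.preimage_null <|
    measure_union_null ?_ <| measure_iUnion_null fun i => ?_
  · exact volume_range_eq_zero_of_contDiff (contDiff_sin_comp_linearMap A) (by simpa using hWd)
  · exact Measure.pi_eval_preimage_null _ ((toFinite _).measure_zero volume)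

/-- For the sine model `Φ_i(w) = sin(Σ_j a_{ij} w_j)` with `W < d` and arbitrary real
coefficients, the set of gradient-flow learnable targets has Lebesgue measure zero. -/
theorem sin_model_learnable_measure_zero (W d : ℕ) (hW : 1 ≤ W) (hWd : W < d)
    (a : Fin d → Fin W → ℝ) :
    MeasureTheory.volume
      (learnableSet (fun w : EuclideanSpace ℝ (Fin W) =>
        (WithLp.toLp 2 (fun i => Real.sin (∑ j, a i j * w j)) : EuclideanSpace ℝ (Fin d)))) = 0 :=
  sin_model_learnable_measure_zero_general W d hWd a
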